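/- Consider an IDV social choice setting in which every valuation v_i is decomposable and differentiable in its own signal s_i, and let f : S → Δ(𝒜) be a randomized social choice function. If f satisfies weak monotonicity (W-Mon), then the profile v satisfies f-single-crossing. -/

import Mathlib

open Finset

noncomputable section

/-- The signal profile lies in the signal space `[0,1]^n`. -/
def InSig {n : ℕ} (s : Fin n → ℝ) : Prop := ∀ i, s i ∈ Set.Icc (0 : ℝ) 1

/-- Expected value `⟨u, d⟩ = ∑ a, d a · u a` of the vector `u` under the distribution `d`. -/
def expVal {A : Type*} [Fintype A] (u d : A → ℝ) : ℝ := ∑ a, d a * u a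

variable {n : ℕ} {A : Type*} [Fintype A]

/-- Valuations are nonnegative and nondecreasing in every signal coordinate. -/
def ValidVals (v : Fin n → A → (Fin n → ℝ) → ℝ) : Prop :=
  (∀ i a (s : Fin n → ℝ), InSig s → 0 ≤ v i a s) ∧
  (∀ i a (j : Fin n) (s : Fin n → ℝ), InSig s → ∀ t t' : ℝ, t ∈ Set.Icc (0 : ℝ) 1 →
    t' ∈ Set.Icc (0 : ℝ) 1 → t ≤ t' →
    v i a (Function.update s j t) ≤ v i a (Function.update s j t'))

/-- `f` maps every signal profile to a probability distribution over the alternatives. -/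
def IsDistr (f : (Fin n → ℝ) → A → ℝ) : Prop :=
  ∀ s : Fin n → ℝ, InSig s → (∀ a, 0 ≤ f s a) ∧ ∑ a, f s a = 1

/-- `v i` is decomposable: `v i a s = v̂ i s * h a s₋ᵢ + g a s₋ᵢ` with `v̂, h ≥ 0`, where
`h` and `g` depend only on the signals of the agents other than `i`. -/
def Decomposable (v : Fin n → A → (Fin n → ℝ) → ℝ) : Prop :=
  ∀ i, ∃ (vh : (Fin n → ℝ) → ℝ) (h g : A → (Fin n → ℝ) → ℝ),
    (∀ s : Fin n → ℝ, InSig s → 0 ≤ vh s) ∧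
    (∀ a (s : Fin n → ℝ), InSig s → 0 ≤ h a s) ∧
    (∀ a (s : Fin n → ℝ), InSig s → ∀ t ∈ Set.Icc (0 : ℝ) 1,
      h a (Function.update s i t) = h a s) ∧
    (∀ a (s : Fin n → ℝ), InSig s → ∀ t ∈ Set.Icc (0 : ℝ) 1,
      g a (Function.update s i t) = g a s) ∧
    (∀ a (s : Fin n → ℝ), InSig s → v i a s = vh s * h a s + g a s)

/-- `dv i a s` is the derivative of `v i a` with respect to agent `i`'s own signal at `s`. -/
def IsOwnDeriv (v dv : Fin n → A → (Fin n → ℝ) → ℝ) : Prop :=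
  ∀ i a (s : Fin n → ℝ), InSig s →
    HasDerivWithinAt (fun t => v i a (Function.update s i t)) (dv i a s)
      (Set.Icc (0 : ℝ) 1) (s i)

/-- The profile `v` satisfies `f`-single-crossing: for all `i`, `s₋ᵢ` and signals
`sᵢ < z`, `⟨∂vᵢ/∂sᵢ(sᵢ, s₋ᵢ), f(z, s₋ᵢ)⟩ ≥ ⟨∂vᵢ/∂sᵢ(sᵢ, s₋ᵢ), f(sᵢ, s₋ᵢ)⟩`. -/
def FSC (dv : Fin n → A → (Fin n → ℝ) → ℝ) (f : (Fin n → ℝ) → A → ℝ) : Prop :=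
  ∀ i (s : Fin n → ℝ), InSig s → ∀ z ∈ Set.Icc (0 : ℝ) 1, s i < z →
    expVal (fun a => dv i a s) (f (Function.update s i z)) ≥
      expVal (fun a => dv i a s) (f s)

/-- `f` satisfies weak monotonicity (W-Mon):
`⟨vᵢ(z, s₋ᵢ) − vᵢ(s), f(z, s₋ᵢ) − f(s)⟩ ≥ 0`. -/
def WMon (v : Fin n → A → (Fin n → ℝ) → ℝ) (f : (Fin n → ℝ) → A → ℝ) : Prop :=
  ∀ i (s : Fin n → ℝ), InSig s → ∀ z ∈ Set.Icc (0 : ℝ) 1,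
    expVal (fun a => v i a (Function.update s i z) - v i a s)
      (fun a => f (Function.update s i z) a - f s a) ≥ 0

/-!
Fix an agent `i` and the others' signals, and look at the slices `t ↦ vᵢ(a; t, s₋ᵢ)`. By
decomposability they are `ψ(t) · hₐ + gₐ` for one common function `ψ` and constants `hₐ ≥ 0`,
`gₐ`, so the derivatives `∂vᵢ(a)/∂sᵢ` are `c · hₐ` for a common factor `c`, nonnegative because
the slices are monotone. Likewise W-Mon between `sᵢ < z` reads
`(ψ(z) - ψ(sᵢ)) · ⟨h, f(z) - f(sᵢ)⟩ ≥ 0`. Either `ψ(z) > ψ(sᵢ)`, so `⟨h, f(z) - f(sᵢ)⟩ ≥ 0`,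
which is f-single-crossing after scaling by `c`; or every slice is constant on `[sᵢ, z]` by
monotonicity, and all derivatives vanish.
-/

open Set

lemma InSig.update {s : Fin n → ℝ} (hs : InSig s) (i : Fin n) {t : ℝ}
    (ht : t ∈ Icc (0 : ℝ) 1) : InSig (Function.update s i t) :=
  (Function.forall_update_iff s fun _ u => u ∈ Icc (0 : ℝ) 1).2 ⟨ht, fun j _ => hs j⟩

section Slice

variable {I : Set ℝ} {φ φ₀ φ₁ ψ : ℝ → ℝ} {x z d d₀ d₁ c₀ c₁ b₀ b₁ : ℝ}

lemma HasDerivWithinAt.eq_zero_of_monotoneOn_of_eq (hd : HasDerivWithinAt φ d I x)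
    (hφ : MonotoneOn φ I) (hxz : x < z) (hI : Icc x z ⊆ I) (heq : φ z = φ x) : d = 0 := by
  have hx : x ∈ Icc x z := left_mem_Icc.2 hxz.le
  have hconst : ∀ t ∈ Icc x z, φ t = φ x := fun t ht =>
    le_antisymm (heq ▸ hφ (hI ht) (hI (right_mem_Icc.2 hxz.le)) ht.2) (hφ (hI hx) (hI ht) ht.1)
  exact (uniqueDiffOn_Icc hxz x hx).eq_deriv _ (hd.mono hI)
    ((hasDerivWithinAt_const x _ (φ x)).congr hconst rfl)

/-- `c₀ φ₁ - c₁ φ₀` is constant on `I`, so its derivative `c₀ d₁ - c₁ d₀` vanishes. -/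
lemma HasDerivWithinAt.mul_eq_mul_of_eqOn_affine (hI : UniqueDiffWithinAt ℝ I x) (hx : x ∈ I)
    (hd₀ : HasDerivWithinAt φ₀ d₀ I x) (hd₁ : HasDerivWithinAt φ₁ d₁ I x)
    (he₀ : EqOn φ₀ (fun t => ψ t * c₀ + b₀) I) (he₁ : EqOn φ₁ (fun t => ψ t * c₁ + b₁) I) :
    c₀ * d₁ = c₁ * d₀ := by
  have hconst : HasDerivWithinAt (fun t => c₀ * φ₁ t - c₁ * φ₀ t) 0 I x :=
    (hasDerivWithinAt_const x I (c₀ * b₁ - c₁ * b₀)).congr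
      (fun t ht => by rw [he₀ ht, he₁ ht]; ring) (by rw [he₀ hx, he₁ hx]; ring)
  exact sub_eq_zero.1 <| hI.eq_deriv _ ((hd₁.const_mul c₀).sub (hd₀.const_mul c₁)) hconst

variable {Φ : A → ℝ → ℝ} {c b D p q : A → ℝ}

lemma sum_mul_le_sum_mul_of_affine_of_ne (hxz : x < z) (hI : Icc x z ⊆ I)
    (hc : ∀ a, 0 ≤ c a) (hΦ : ∀ a, EqOn (Φ a) (fun t => ψ t * c a + b a) I)
    (hmono : ∀ a, MonotoneOn (Φ a) I) (hD : ∀ a, HasDerivWithinAt (Φ a) (D a) I x)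
    (hw : 0 ≤ ∑ a, (q a - p a) * (Φ a z - Φ a x)) {a₀ : A} (ha₀ : Φ a₀ z ≠ Φ a₀ x) :
    ∑ a, p a * D a ≤ ∑ a, q a * D a := by
  have hx : x ∈ I := hI (left_mem_Icc.2 hxz.le)
  have hz : z ∈ I := hI (right_mem_Icc.2 hxz.le)
  have hdiff : ∀ a, Φ a z - Φ a x = (ψ z - ψ x) * c a := fun a => by
    rw [hΦ a hz, hΦ a hx]; ring
  have hpos : 0 < (ψ z - ψ x) * c a₀ :=
    hdiff a₀ ▸ sub_pos.2 (lt_of_le_of_ne (hmono a₀ hx hz hxz.le) (Ne.symm ha₀))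
  have hψ : 0 < ψ z - ψ x := pos_of_mul_pos_left hpos (hc a₀)
  have hc₀ : 0 < c a₀ := pos_of_mul_pos_right hpos hψ.le
  have hUI : UniqueDiffWithinAt ℝ I x :=
    (uniqueDiffOn_Icc hxz x (left_mem_Icc.2 hxz.le)).mono hI
  have hD₀ : 0 ≤ D a₀ := (hD a₀).nonneg_of_monotoneOn hUI.accPt (hmono a₀)
  have hprop : ∀ a, c a₀ * D a = c a * D a₀ := fun a =>
    (hD a₀).mul_eq_mul_of_eqOn_affine hUI hx (hD a) (hΦ a₀) (hΦ a)
  have hΔ : 0 ≤ ∑ a, (q a - p a) * c a := by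
    simp_rw [hdiff, mul_left_comm _ (ψ z - ψ x), ← Finset.mul_sum] at hw
    exact nonneg_of_mul_nonneg_right hw hψ
  have key : c a₀ * (∑ a, q a * D a - ∑ a, p a * D a) = D a₀ * ∑ a, (q a - p a) * c a := by
    rw [← Finset.sum_sub_distrib, Finset.mul_sum, Finset.mul_sum]
    refine Finset.sum_congr rfl fun a _ => ?_
    linear_combination (q a - p a) * hprop a
  exact sub_nonneg.1 <| nonneg_of_mul_nonneg_right (key ▸ mul_nonneg hD₀ hΔ) hc₀

lemma sum_mul_le_sum_mul_of_affine (hxz : x < z) (hI : Icc x z ⊆ I)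
    (hc : ∀ a, 0 ≤ c a) (hΦ : ∀ a, EqOn (Φ a) (fun t => ψ t * c a + b a) I)
    (hmono : ∀ a, MonotoneOn (Φ a) I) (hD : ∀ a, HasDerivWithinAt (Φ a) (D a) I x)
    (hw : 0 ≤ ∑ a, (q a - p a) * (Φ a z - Φ a x)) :
    ∑ a, p a * D a ≤ ∑ a, q a * D a := by
  by_cases hconst : ∀ a, Φ a z = Φ a x
  · have hD₀ : ∀ a, D a = 0 := fun a =>
      (hD a).eq_zero_of_monotoneOn_of_eq (hmono a) hxz hI (hconst a)
    simp [hD₀]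
  · push Not at hconst
    obtain ⟨a₀, ha₀⟩ := hconst
    exact sum_mul_le_sum_mul_of_affine_of_ne hxz hI hc hΦ hmono hD hw ha₀

end Slice

theorem wmon_implies_fsc_of_decomposable_general
    (v dv : Fin n → A → (Fin n → ℝ) → ℝ)
    (f : (Fin n → ℝ) → A → ℝ)
    (hv : ValidVals v) (hdec : Decomposable v) (hdv : IsOwnDeriv v dv)
    (hwmon : WMon v f) :
    FSC dv f := by
  intro i s hs z hz hsz
  obtain ⟨vh, h, g, -, hh, hh_indep, hg_indep, hdecomp⟩ := hdec i
  have hslice : ∀ a, EqOn (fun t => v i a (Function.update s i t))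
      (fun t => vh (Function.update s i t) * h a s + g a s) (Icc 0 1) := fun a t ht => by
    dsimp only
    rw [hdecomp a _ (hs.update i ht), hh_indep a s hs t ht, hg_indep a s hs t ht]
  exact sum_mul_le_sum_mul_of_affine hsz (Icc_subset_Icc (hs i).1 hz.2) (fun a => hh a s hs)
    hslice (fun a _ ht _ ht' htt' => hv.2 i a i s hs _ _ ht ht' htt') (fun a => hdv i a s hs)
    (by simpa only [expVal, ge_iff_le, Function.update_eq_self] using hwmon i s hs z hz)

/-- With decomposable valuations, weak monotonicity (W-Mon) of `f`
implies that the profile `v` satisfies `f`-single-crossing. -/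
theorem wmon_implies_fsc_of_decomposable
    (v dv : Fin n → A → (Fin n → ℝ) → ℝ)
    (f : (Fin n → ℝ) → A → ℝ)
    (hv : ValidVals v) (hdec : Decomposable v) (hdv : IsOwnDeriv v dv)
    (hf : IsDistr f)
    (hwmon : WMon v f) :
    FSC dv f :=
  wmon_implies_fsc_of_decomposable_general v dv f hv hdec hdv hwmon
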